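/- Let K be a field of characteristic p > 0 and ω = Σ_I a_I dz_I a closed rational r-form (dω = 0) over K(z_1,...,z_n). Then for every multi-index I, the function ∂_I^{p−1}(a_I) := ∂_{i_1}^{p−1}···∂_{i_r}^{p−1}(a_I) lies in K(z_1^p,...,z_n^p); equivalently ∂_j(∂_I^{p−1}(a_I)) = 0 for all j = 1,...,n. -/

import Mathlib

open MvPolynomial

/-- An `r`-form in `n` variables with coefficients in `R`, written in the standard basis of the
`dz_I` indexed by the `r`-element subsets `I` of the set of variables. -/
abbrev GForm (R : Type) (n r : ℕ) := {s : Finset (Fin n) // s.card = r} → R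

/-- The exterior derivative of an `r`-form, relative to a family `D` of partial derivatives:
`(dω)_T = ∑_{j ∈ T} (-1)^{pos of j in T} D_j ω_{T∖{j}}`. -/
noncomputable def gextd {R : Type} [CommRing R] {n r : ℕ} (D : Fin n → R → R)
    (ω : GForm R n r) : GForm R n (r + 1) :=
  fun T => ∑ j ∈ T.1.attach,
    (-1 : R) ^ ((T.1.filter (fun k => k < j.1)).card) *
      D j.1 (ω ⟨T.1.erase j.1, by rw [Finset.card_erase_of_mem j.2, T.2]; rfl⟩)

/-- The iterated operator `∂_{i_1}^{p-1} ⋯ ∂_{i_r}^{p-1}` for `T = {i_1 < … < i_r}`. -/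
def gpdSet {R : Type} {n : ℕ} (D : Fin n → R → R) (p : ℕ) (T : Finset (Fin n)) (f : R) : R :=
  (T.sort (· ≤ ·)).foldr (fun i g => (D i)^[p - 1] g) f

/-- The family of formal partial derivatives on `K[z_1,…,z_n]`. -/
noncomputable def pderivFam (K : Type) [CommRing K] (n : ℕ) :
    Fin n → MvPolynomial (Fin n) K → MvPolynomial (Fin n) K :=
  fun i f => pderiv i f


/-!
Extend the `∂_j` to `K`-derivations `δ_j` of `K(z)`. Every `x ∈ K(z)` can be written `f / g^p`
with `f, g ∈ K[z]`, and `g^p` is killed by every `δ_j`; hence the identities `δ_i δ_j = δ_j δ_i`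
and `δ_j^p = 0`, which hold on `K[z]`, hold on `K(z)`. For `j ∈ I`, `δ_j ∂_I^{p-1} a_I` contains
`δ_j^p` and vanishes. For `j ∉ I`, apply `∂_I^{p-1}` to the coefficient of `dω = 0` at `I ∪ {j}`:
every term but `±∂_I^{p-1} δ_j a_I` contains some `δ_i^p` with `i ∈ I`. Finally, if all `δ_j`
kill `x = f / g^p`, then all `∂_j f` vanish, so every exponent of `f` is divisible by `p` and
`x ∈ K(z^p)`.
-/

namespace MvPolynomial

variable {σ R : Type*} [CommRing R]

theorem pderiv_pderiv_comm (i j : σ) (f : MvPolynomial σ R) :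
    pderiv i (pderiv j f) = pderiv j (pderiv i f) := by
  have h : ⁅pderiv i, pderiv j⁆ = (0 : Derivation R (MvPolynomial σ R) (MvPolynomial σ R)) :=
    derivation_ext fun k => by
      classical
      rw [Derivation.commutator_apply]
      simp [pderiv_X, Pi.single_apply, apply_ite]
  simpa [Derivation.commutator_apply, sub_eq_zero] using congr($h f)

theorem coeff_iterate_pderiv (i : σ) (k : ℕ) (f : MvPolynomial σ R) (m : σ →₀ ℕ) :
    coeff m ((pderiv i)^[k] f) = coeff (m + Finsupp.single i k) f * (m i + k).descFactorial k := by
  induction k generalizing m with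
  | zero => simp
  | succ k ih =>
    rw [Function.iterate_succ_apply', coeff_pderiv, ih, add_assoc, ← Finsupp.single_add,
      add_comm 1 k, Finsupp.add_apply, Finsupp.single_eq_same, Nat.descFactorial_succ,
      show m i + (k + 1) - k = m i + 1 by omega, show m i + (k + 1) = m i + 1 + k by omega]
    push_cast
    ring

theorem iterate_pderiv_eq_zero_of_charP (p : ℕ) [CharP R p] (hp : p ≠ 0) (i : σ)
    (f : MvPolynomial σ R) : (pderiv i)^[p] f = 0 := by
  ext m
  rw [coeff_iterate_pderiv, coeff_zero,
    (CharP.cast_eq_zero_iff R p _).mpr ((Nat.dvd_factorial (Nat.pos_of_ne_zero hp) le_rfl).trans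
      (Nat.factorial_dvd_descFactorial _ _)), mul_zero]

theorem pderiv_pow_charP (p : ℕ) [CharP R p] (i : σ) (f : MvPolynomial σ R) :
    pderiv i (f ^ p) = 0 := by
  rw [pderiv_pow, CharP.cast_eq_zero, zero_mul, zero_mul]

variable {K : Type*} [Field K] (p : ℕ) [CharP K p]

theorem dvd_of_mem_support_of_forall_pderiv_eq_zero {f : MvPolynomial σ K}
    (hf : ∀ i, pderiv i f = 0) {e : σ →₀ ℕ} (he : e ∈ f.support) (i : σ) : p ∣ e i := by
  obtain h0 | hpos := Nat.eq_zero_or_pos (e i)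
  · rw [h0]; exact dvd_zero p
  have hsplit : e - Finsupp.single i 1 + Finsupp.single i 1 = e :=
    tsub_add_cancel_of_le (Finsupp.single_le_iff.mpr hpos)
  have hcoeff := congr(coeff (e - Finsupp.single i 1) $(hf i))
  rw [coeff_pderiv, hsplit, coeff_zero, Finsupp.tsub_apply, Finsupp.single_eq_same,
    ← Nat.cast_add_one, Nat.sub_add_cancel hpos] at hcoeff
  exact (CharP.cast_eq_zero_iff K p _).mp
    ((mul_eq_zero.mp hcoeff).resolve_left (mem_support_iff.mp he))

theorem algebraMap_mem_adjoin_X_pow_of_forall_pderiv_eq_zero {L : Type*} [Field L]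
    [Algebra (MvPolynomial σ K) L] [Algebra K L] [IsScalarTower K (MvPolynomial σ K) L]
    {f : MvPolynomial σ K} (hf : ∀ i, pderiv i f = 0) :
    algebraMap _ L f ∈
      IntermediateField.adjoin K
        (Set.range fun i => algebraMap (MvPolynomial σ K) L (X i ^ p)) := by
  rw [f.as_sum, map_sum]
  refine sum_mem fun e he => ?_
  rw [monomial_eq, map_mul, ← algebraMap_eq, ← IsScalarTower.algebraMap_apply, Finsupp.prod,
    map_prod]
  refine mul_mem (IntermediateField.algebraMap_mem _ _) (prod_mem fun i _ => ?_)
  rw [← Nat.mul_div_cancel' (dvd_of_mem_support_of_forall_pderiv_eq_zero p hf he i), pow_mul,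
    map_pow]
  exact pow_mem (IntermediateField.subset_adjoin _ _ (Set.mem_range_self i)) _

end MvPolynomial

def Derivation.ofLeibniz {R A : Type*} [CommSemiring R] [CommRing A] [Algebra R A]
    (D : A → A) (map_add : ∀ a b, D (a + b) = D a + D b)
    (leibniz : ∀ a b, D (a * b) = a * D b + b * D a)
    (map_algebraMap : ∀ r, D (algebraMap R A r) = 0) :
    Derivation R A A :=
  .mk' { toFun := D, map_add' := map_add
         map_smul' := fun r a => by
           rw [RingHom.id_apply, Algebra.smul_def, leibniz, map_algebraMap, mul_zero, add_zero,
             ← Algebra.smul_def] } leibniz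

section FractionField

variable {R A L : Type*} [CommRing R] [CommRing A] [Field L] [Algebra R L] [Algebra A L]
  [IsFractionRing A L]

theorem Derivation.eq_zero_of_isFractionRing (d : Derivation R L L)
    (h : ∀ a, d (algebraMap A L a) = 0) : d = 0 := by
  ext x
  obtain ⟨a, b, -, rfl⟩ := IsFractionRing.div_surjective (A := A) x
  simp [Derivation.leibniz_div, h]

theorem IsFractionRing.exists_eq_div_pow {n : ℕ} (hn : n ≠ 0) (x : L) :
    ∃ a b : A, b ∈ nonZeroDivisors A ∧ x = algebraMap A L a / algebraMap A L (b ^ n) := by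
  obtain ⟨a, b, hb, rfl⟩ := IsFractionRing.div_surjective (A := A) x
  obtain ⟨m, rfl⟩ := Nat.exists_eq_add_one_of_ne_zero hn
  have : Nontrivial A := (IsFractionRing.nontrivial_iff_nontrivial A L).mpr inferInstance
  refine ⟨a * b ^ m, b, hb, ?_⟩
  rw [map_mul, map_pow, map_pow, pow_succ', mul_div_mul_right _ _
    (pow_ne_zero m (IsFractionRing.to_map_ne_zero_of_mem_nonZeroDivisors hb))]

end FractionField

section ExtensionsOfPDeriv

variable {σ K L : Type*} [Field K] [Field L] [Algebra K L] [Algebra (MvPolynomial σ K) L]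
  [IsFractionRing (MvPolynomial σ K) L] {δ : σ → Derivation K L L}

local notation "φ" => algebraMap (MvPolynomial σ K) L

theorem commute_of_forall_apply_algebraMap_eq_pderiv
    (hδ : ∀ i f, δ i (φ f) = φ (pderiv i f)) (i j : σ) :
    Commute (δ i : Module.End K L) (δ j) := by
  have h : ⁅δ i, δ j⁆ = 0 := Derivation.eq_zero_of_isFractionRing (A := MvPolynomial σ K) _
    fun f => by rw [Derivation.commutator_apply, hδ, hδ, hδ, hδ, pderiv_pderiv_comm, sub_self]
  refine LinearMap.ext fun x => ?_
  simpa [Derivation.commutator_apply, sub_eq_zero] using congr($h x)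

variable (p : ℕ) [CharP K p]

theorem pow_eq_zero_of_forall_apply_algebraMap_eq_pderiv (hp : p ≠ 0)
    (hδ : ∀ i f, δ i (φ f) = φ (pderiv i f)) (i : σ) :
    (δ i : Module.End K L) ^ p = 0 := by
  refine LinearMap.ext fun x => ?_
  obtain ⟨f, g, -, rfl⟩ := IsFractionRing.exists_eq_div_pow (A := MvPolynomial σ K) hp x
  have hdiv : Function.Semiconj (· / φ (g ^ p)) (δ i) (δ i) := fun y => by
    dsimp only
    rw [Derivation.leibniz_div_const _ _ _ (by rw [hδ, pderiv_pow_charP, map_zero]), smul_eq_mul,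
      inv_mul_eq_div]
  have hpoly : Function.Semiconj φ (pderiv i) (δ i) := fun f => (hδ i f).symm
  rw [Module.End.pow_apply, Derivation.coeFn_coe, LinearMap.zero_apply, ← hdiv.iterate_right,
    ← hpoly.iterate_right, iterate_pderiv_eq_zero_of_charP p hp, map_zero]
  exact zero_div _

theorem mem_adjoin_X_pow_of_forall_apply_eq_zero [IsScalarTower K (MvPolynomial σ K) L]
    (hp : p ≠ 0) (hδ : ∀ i f, δ i (φ f) = φ (pderiv i f)) {x : L} (hx : ∀ i, δ i x = 0) :
    x ∈ IntermediateField.adjoin K (Set.range fun i => φ (X i ^ p)) := by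
  obtain ⟨f, g, hg, rfl⟩ := IsFractionRing.exists_eq_div_pow (A := MvPolynomial σ K) hp x
  have hgp : ∀ i, pderiv i (g ^ p) = 0 := fun i => pderiv_pow_charP p i g
  have hf : ∀ i, pderiv i f = 0 := fun i => by
    have h := hx i
    rw [Derivation.leibniz_div_const _ _ _ (by rw [hδ, hgp, map_zero]), hδ, smul_eq_mul,
      mul_eq_zero, inv_eq_zero] at h
    exact (IsFractionRing.injective (MvPolynomial σ K) L).eq_iff.mp
      ((h.resolve_left (IsFractionRing.to_map_ne_zero_of_mem_nonZeroDivisors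
        (pow_mem hg p))).trans (map_zero _).symm)
  exact div_mem (algebraMap_mem_adjoin_X_pow_of_forall_pderiv_eq_zero p hf)
    (algebraMap_mem_adjoin_X_pow_of_forall_pderiv_eq_zero p hgp)

end ExtensionsOfPDeriv

theorem List.prod_map_pow_pred_mul_eq_zero {ι M : Type*} [MonoidWithZero M] {e : ι → M}
    {p : ℕ} (hp : p ≠ 0) (hcomm : ∀ i j, Commute (e i) (e j)) (hnil : ∀ i, e i ^ p = 0)
    {l : List ι} {j : ι} (hj : j ∈ l) : (l.map fun i => e i ^ (p - 1)).prod * e j = 0 := by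
  induction l with
  | nil => simp at hj
  | cons i l ih =>
    rw [List.map_cons, List.prod_cons, mul_assoc]
    rcases List.mem_cons.mp hj with rfl | hj
    · have hc : Commute (e j) (l.map fun i => e i ^ (p - 1)).prod :=
        Commute.list_prod_right _ _ <| List.forall_mem_map.mpr fun i _ => (hcomm j i).pow_right _
      rw [← hc.eq, ← mul_assoc, pow_sub_one_mul hp, hnil, zero_mul]
    · rw [ih hj, mul_zero]

theorem map_neg_one_pow_mul {R S F : Type*} [Ring R] [Ring S] [FunLike F R S]
    [AddMonoidHomClass F R S] (f : F) (k : ℕ) (x : R) :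
    f ((-1) ^ k * x) = (-1) ^ k * f x := by
  rcases Nat.even_or_odd k with hk | hk <;> simp [hk.neg_one_pow]

section ExteriorDerivative

variable {R L : Type} [Semiring R] [CommRing L] [Module R L] {n p : ℕ}
  (e : Fin n → Module.End R L)

theorem gpdSet_eq_prod_map_pow (T : Finset (Fin n)) (y : L) :
    gpdSet (fun i => e i) p T y = ((T.sort (· ≤ ·)).map fun i => e i ^ (p - 1)).prod y := by
  unfold gpdSet
  induction T.sort (· ≤ ·) with
  | nil => rfl
  | cons i l ih =>
    rw [List.foldr_cons, ih, List.map_cons, List.prod_cons, Module.End.mul_apply,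
      Module.End.pow_apply]

theorem apply_gpdSet_eq_zero_of_gextd_eq_zero (hp : p ≠ 0) (hcomm : ∀ i j, Commute (e i) (e j))
    (hnil : ∀ i, e i ^ p = 0) {r : ℕ} (ω : GForm L n r) (hω : gextd (fun i => e i) ω = 0)
    (T : {s : Finset (Fin n) // s.card = r}) (j : Fin n) :
    e j (gpdSet (fun i => e i) p T.1 (ω T)) = 0 := by
  set P := ((T.1.sort (· ≤ ·)).map fun i => e i ^ (p - 1)).prod
  have hkill : ∀ i ∈ T.1, P * e i = 0 := fun i hi =>
    List.prod_map_pow_pred_mul_eq_zero hp hcomm hnil ((Finset.mem_sort _).mpr hi)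
  have hcomm_P : Commute (e j) P :=
    Commute.list_prod_right _ _ <| List.forall_mem_map.mpr fun i _ => (hcomm j i).pow_right _
  rw [gpdSet_eq_prod_map_pow, ← Module.End.mul_apply, hcomm_P.eq, Module.End.mul_apply]
  by_cases hj : j ∈ T.1
  · rw [← Module.End.mul_apply, hkill j hj, LinearMap.zero_apply]
  set T' : {s : Finset (Fin n) // s.card = r + 1} :=
    ⟨insert j T.1, by rw [Finset.card_insert_of_notMem hj, T.2]⟩
  have h := congr(P $(congr_fun hω T'))
  rw [gextd, map_sum, Pi.zero_apply, map_zero, Finset.sum_eq_single_of_mem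
    ⟨j, Finset.mem_insert_self j T.1⟩ (Finset.mem_attach _ _)] at h
  · have hT : ∀ hcard, (⟨T'.1.erase j, hcard⟩ : {s : Finset (Fin n) // s.card = r}) = T := fun _ =>
      Subtype.ext (Finset.erase_insert hj)
    rwa [map_neg_one_pow_mul, neg_one_pow_mul_eq_zero_iff, hT] at h
  · rintro ⟨i, hi⟩ - hij
    have hiT : i ∈ T.1 := (Finset.mem_insert.mp hi).resolve_left fun hij' => hij (Subtype.ext hij')
    rw [map_neg_one_pow_mul, ← Module.End.mul_apply, hkill i hiT, LinearMap.zero_apply, mul_zero]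

end ExteriorDerivative

/-- Over a field `K` of characteristic `p > 0`, if `ω = ∑_I a_I dz_I` is a
closed rational `r`-form, then for every multi-index `I` the function
`∂_I^{p-1}(a_I) = ∂_{i_1}^{p-1} ⋯ ∂_{i_r}^{p-1}(a_I)` lies in `K(z_1^p,…,z_n^p)`;
equivalently all its partial derivatives vanish. The partial derivatives on `K(z)` are any
family of derivations extending the formal `∂_j` of `K[z]`. -/
theorem closed_form_iterated_deriv_coeff_mem_pth_power_subfield
    (K : Type) [Field K] (p n r : ℕ) [CharP K p] (hp : 0 < p)
    (D : Fin n → FractionRing (MvPolynomial (Fin n) K) → FractionRing (MvPolynomial (Fin n) K))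
    (hDadd : ∀ j a b, D j (a + b) = D j a + D j b)
    (hDmul : ∀ j a b, D j (a * b) = a * D j b + b * D j a)
    (hDalg : ∀ (j : Fin n) (g : MvPolynomial (Fin n) K),
      D j (algebraMap (MvPolynomial (Fin n) K) (FractionRing (MvPolynomial (Fin n) K)) g) =
        algebraMap (MvPolynomial (Fin n) K) (FractionRing (MvPolynomial (Fin n) K)) (pderiv j g))
    (ω : GForm (FractionRing (MvPolynomial (Fin n) K)) n r)
    (hclosed : gextd D ω = 0) :
    ∀ T : {s : Finset (Fin n) // s.card = r},
      gpdSet D p T.1 (ω T) ∈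
          IntermediateField.adjoin K (Set.range fun i : Fin n =>
            algebraMap (MvPolynomial (Fin n) K) (FractionRing (MvPolynomial (Fin n) K))
              (X i ^ p)) ∧
        ∀ j : Fin n, D j (gpdSet D p T.1 (ω T)) = 0 := by
  intro T
  let δ (j : Fin n) : Derivation K (FractionRing (MvPolynomial (Fin n) K))
      (FractionRing (MvPolynomial (Fin n) K)) :=
    .ofLeibniz (D j) (hDadd j) (hDmul j) fun c => by
      rw [IsScalarTower.algebraMap_apply K (MvPolynomial (Fin n) K), hDalg, algebraMap_eq,
        pderiv_C, map_zero]
  have hvanish (j : Fin n) : δ j (gpdSet (fun i => δ i) p T.1 (ω T)) = 0 :=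
    apply_gpdSet_eq_zero_of_gextd_eq_zero (fun i => (δ i : Module.End K _)) hp.ne'
      (commute_of_forall_apply_algebraMap_eq_pderiv hDalg)
      (pow_eq_zero_of_forall_apply_algebraMap_eq_pderiv p hp.ne' hDalg) ω hclosed T j
  exact ⟨mem_adjoin_X_pow_of_forall_apply_eq_zero p hp.ne' hDalg hvanish, hvanish⟩
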